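/- arXiv:0906.5375 — 2 statements merged into one kernel-verified Lean document; each statement's English description precedes it below -/
import Mathlib

section
/- Let P satisfy the Lasota-Yorke inequality V(Pf) ≤ α₀·V(f) + B₀·‖f‖₁ with α₀ < 1/3, and ‖Pf‖₁ ≤ ‖f‖₁. Define the hole operator P_H f = P(f·χ_{X₀}) where X₀ = [0,1]\H and H is an open interval. Then V(P_H f) ≤ 3α₀·V(f) + (2α₀ + B₀)·‖f‖₁ for all f ∈ BV([0,1]). -/
/-!
On the hole `(a, b)` the function `f · χ_{X₀}` vanishes, so its variation on `[a, b]` is at most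
`|f a| + |f b|`, while on `[0, a]` and `[b, 1]` it agrees with `f`. Each value of `f` on `[0, 1]`
differs from the mean of `|f|` by at most `V(f)`, so `|f a|, |f b| ≤ V(f) + ‖f‖₁`, giving
`V(f · χ_{X₀}) ≤ 3 V(f) + 2 ‖f‖₁`. The Lasota–Yorke inequality for `P` applied to `f · χ_{X₀}`,
whose `L¹` norm is at most that of `f`, then yields the claim.
-/

open MeasureTheory Set ENNReal

noncomputable def bvVar (f : ℝ → ℝ) : ℝ≥0∞ := eVariationOn f (Set.Icc 0 1)

noncomputable def l1Norm (f : ℝ → ℝ) : ℝ≥0∞ := ∫⁻ x in Set.Icc (0:ℝ) 1, (‖f x‖₊ : ℝ≥0∞)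

/-- Collapsing `Ioo c d` to one of its points is a monotone reparametrization that does not
change `f` on `Icc c d`, so only three values of `f` contribute to the variation. -/
theorem eVariationOn_Icc_le_of_forall_Ioo_eq {α E : Type*} [LinearOrder α]
    [PseudoEMetricSpace E] {f : α → E} {c d : α} {y : E}
    (hf : ∀ x ∈ Ioo c d, f x = y) :
    eVariationOn f (Icc c d) ≤ edist (f c) y + edist y (f d) := by
  rcases (Ioo c d).eq_empty_or_nonempty with hempty | ⟨m, hm⟩
  · have hsub : Icc c d ⊆ {c, d} := sdiff_eq_empty.1 (by rw [Icc_sdiff_both, hempty])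
    calc eVariationOn f (Icc c d) ≤ eVariationOn f {c, d} := eVariationOn.mono f hsub
      _ = edist (f c) (f d) := eVariationOn.pair f c d
      _ ≤ edist (f c) y + edist y (f d) := edist_triangle _ _ _
  · set ψ : α → α := fun x => if x ∈ Ioo c d then m else x
    have hψ : MonotoneOn ψ (Icc c d) := by
      intro x hx x' hx' hxx'
      simp only [ψ]
      split_ifs with h h' h' <;> grind
    have hmaps : MapsTo ψ (Icc c d) ({c, m} ∪ {m, d}) := by
      intro x hx
      simp only [ψ]
      split_ifs with h
      · simp
      · grind
    have hcomp : EqOn (f ∘ ψ) f (Icc c d) := by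
      intro x _
      simp only [Function.comp, ψ]
      split_ifs with h
      · rw [hf m hm, hf x h]
      · rfl
    calc eVariationOn f (Icc c d) = eVariationOn (f ∘ ψ) (Icc c d) :=
          (eVariationOn.eq_of_eqOn hcomp).symm
      _ ≤ eVariationOn f ({c, m} ∪ {m, d}) := eVariationOn.comp_le_of_monotoneOn f ψ hψ hmaps
      _ = edist (f c) (f m) + edist (f m) (f d) := by
          rw [eVariationOn.union f (x := m) ⟨by simp, by simp [hm.1.le]⟩
            ⟨by simp, by simp [hm.2.le]⟩, eVariationOn.pair, eVariationOn.pair]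
      _ = edist (f c) y + edist y (f d) := by rw [hf m hm]

/-- Averaging `‖f x‖ₑ ≤ eVariationOn f s + ‖f y‖ₑ` over `y ∈ s`. -/
theorem enorm_mul_measure_le_eVariationOn_mul_add_setLIntegral {α E : Type*} [LinearOrder α]
    [MeasurableSpace α] [SeminormedAddCommGroup E] (μ : Measure α) {f : α → E} {s : Set α}
    (hs : MeasurableSet s) {x : α} (hx : x ∈ s) :
    ‖f x‖ₑ * μ s ≤ eVariationOn f s * μ s + ∫⁻ y in s, ‖f y‖ₑ ∂μ := by
  have hpoint : ∀ y ∈ s, ‖f x‖ₑ ≤ eVariationOn f s + ‖f y‖ₑ := fun y hy =>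
    calc ‖f x‖ₑ = edist (f x) 0 := (edist_zero_right _).symm
      _ ≤ edist (f x) (f y) + edist (f y) 0 := edist_triangle _ _ _
      _ ≤ eVariationOn f s + ‖f y‖ₑ := by
          rw [edist_zero_right]; gcongr; exact eVariationOn.edist_le f hx hy
  calc ‖f x‖ₑ * μ s = ∫⁻ _ in s, ‖f x‖ₑ ∂μ := (setLIntegral_const s _).symm
    _ ≤ ∫⁻ y in s, (eVariationOn f s + ‖f y‖ₑ) ∂μ := setLIntegral_mono_ae' hs (.of_forall hpoint)
    _ = eVariationOn f s * μ s + ∫⁻ y in s, ‖f y‖ₑ ∂μ := by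
        rw [lintegral_add_left measurable_const, setLIntegral_const]

theorem enorm_le_bvVar_add_l1Norm (f : ℝ → ℝ) {x : ℝ} (hx : x ∈ Icc (0:ℝ) 1) :
    ‖f x‖ₑ ≤ bvVar f + l1Norm f := by
  simpa [Real.volume_Icc, bvVar, l1Norm, enorm_eq_nnnorm] using
    enorm_mul_measure_le_eVariationOn_mul_add_setLIntegral volume (f := f) measurableSet_Icc hx

theorem l1Norm_indicator_le (f : ℝ → ℝ) (s : Set ℝ) : l1Norm (s.indicator f) ≤ l1Norm f :=
  lintegral_mono fun x => by
    by_cases hx : x ∈ s <;> simp [hx]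

theorem bvVar_indicator_diff_Ioo_le_add_enorm (f : ℝ → ℝ) {a b : ℝ} (hab : a < b)
    (ha : a ∈ Icc (0:ℝ) 1) (hb : b ∈ Icc (0:ℝ) 1) :
    bvVar ((Icc 0 1 \ Ioo a b).indicator f) ≤ bvVar f + (‖f a‖ₑ + ‖f b‖ₑ) := by
  set g := (Icc (0:ℝ) 1 \ Ioo a b).indicator f
  have hsplit : ∀ (h : ℝ → ℝ) {p q r : ℝ}, p ≤ q → q ≤ r →
      eVariationOn h (Icc p q) + eVariationOn h (Icc q r) = eVariationOn h (Icc p r) :=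
    fun h p q r hpq hqr => by
      simpa only [univ_inter] using eVariationOn.Icc_add_Icc h hpq hqr (mem_univ q)
  have hgf : EqOn g f (Icc 0 a ∪ Icc b 1) := fun x hx =>
    indicator_of_mem (show x ∈ Icc 0 1 \ Ioo a b by
      simp only [mem_sdiff, mem_Icc, mem_Ioo, mem_union] at hx ha hb ⊢; grind) f
  have hga : g a = f a := hgf (Or.inl ⟨ha.1, le_rfl⟩)
  have hgb : g b = f b := hgf (Or.inr ⟨le_rfl, hb.2⟩)
  have hmid : eVariationOn g (Icc a b) ≤ ‖f a‖ₑ + ‖f b‖ₑ := by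
    have hzero : ∀ x ∈ Ioo a b, g x = 0 := fun x hx => indicator_of_notMem (fun h => h.2 hx) f
    simpa [hga, hgb, edist_zero_right, edist_comm (0:ℝ)] using
      eVariationOn_Icc_le_of_forall_Ioo_eq hzero
  calc bvVar g
        = eVariationOn g (Icc 0 a) + eVariationOn g (Icc a b) + eVariationOn g (Icc b 1) := by
        rw [bvVar, ← hsplit g ha.1 ha.2, ← hsplit g hab.le hb.2, add_assoc]
    _ ≤ eVariationOn f (Icc 0 a) + (‖f a‖ₑ + ‖f b‖ₑ) + eVariationOn f (Icc a 1) := by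
        rw [eVariationOn.eq_of_eqOn (hgf.mono subset_union_left),
          eVariationOn.eq_of_eqOn (hgf.mono subset_union_right)]
        gcongr
        exact eVariationOn.mono f (Icc_subset_Icc_left hab.le)
    _ = bvVar f + (‖f a‖ₑ + ‖f b‖ₑ) := by
        rw [bvVar, ← hsplit f ha.1 ha.2]; ring

theorem bvVar_indicator_diff_Ioo_le (f : ℝ → ℝ) {a b : ℝ} (hab : Ioo a b ⊆ Icc 0 1) :
    bvVar ((Icc 0 1 \ Ioo a b).indicator f) ≤ 3 * bvVar f + 2 * l1Norm f := by
  rcases lt_or_ge a b with hlt | hge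
  · have hsub : Icc a b ⊆ Icc 0 1 := closure_Ioo hlt.ne ▸ closure_minimal hab isClosed_Icc
    have ha : a ∈ Icc (0:ℝ) 1 := hsub (left_mem_Icc.2 hlt.le)
    have hb : b ∈ Icc (0:ℝ) 1 := hsub (right_mem_Icc.2 hlt.le)
    calc bvVar ((Icc 0 1 \ Ioo a b).indicator f) ≤ bvVar f + (‖f a‖ₑ + ‖f b‖ₑ) :=
          bvVar_indicator_diff_Ioo_le_add_enorm f hlt ha hb
      _ ≤ bvVar f + ((bvVar f + l1Norm f) + (bvVar f + l1Norm f)) := by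
          gcongr <;> exact enorm_le_bvVar_add_l1Norm f ‹_›
      _ = 3 * bvVar f + 2 * l1Norm f := by ring
  · have hg : bvVar ((Icc 0 1 \ Ioo a b).indicator f) = bvVar f := by
      rw [Ioo_eq_empty (not_lt.2 hge), sdiff_empty]
      exact eVariationOn.eq_of_eqOn fun x hx => indicator_of_mem hx f
    rw [hg]
    calc bvVar f ≤ 3 * bvVar f := le_mul_of_one_le_left' (by norm_num)
      _ ≤ 3 * bvVar f + 2 * l1Norm f := le_self_add

theorem hole_operator_lasota_yorke_general
    (P : (ℝ → ℝ) → (ℝ → ℝ)) (α₀ B₀ : ℝ)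
    (hα₀ : 0 < α₀) (hB₀ : 0 ≤ B₀)
    (hLY : ∀ f, bvVar (P f) ≤ ENNReal.ofReal α₀ * bvVar f + ENNReal.ofReal B₀ * l1Norm f)
    (a b : ℝ) (hab : Set.Ioo a b ⊆ Set.Icc 0 1) :
    ∀ f, BoundedVariationOn f (Set.Icc 0 1) →
      bvVar (P ((Set.Icc (0:ℝ) 1 \ Set.Ioo a b).indicator f))
        ≤ ENNReal.ofReal (3 * α₀) * bvVar f + ENNReal.ofReal (2 * α₀ + B₀) * l1Norm f := by
  intro f _
  calc bvVar (P ((Icc 0 1 \ Ioo a b).indicator f))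
      ≤ ENNReal.ofReal α₀ * bvVar ((Icc 0 1 \ Ioo a b).indicator f)
        + ENNReal.ofReal B₀ * l1Norm ((Icc 0 1 \ Ioo a b).indicator f) := hLY _
    _ ≤ ENNReal.ofReal α₀ * (3 * bvVar f + 2 * l1Norm f) + ENNReal.ofReal B₀ * l1Norm f := by
        gcongr
        exacts [bvVar_indicator_diff_Ioo_le f hab, l1Norm_indicator_le f _]
    _ = ENNReal.ofReal (3 * α₀) * bvVar f + ENNReal.ofReal (2 * α₀ + B₀) * l1Norm f := by
        rw [ENNReal.ofReal_mul' hα₀.le, ENNReal.ofReal_add (by positivity) hB₀,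
          ENNReal.ofReal_mul' hα₀.le]
        rw [ENNReal.ofReal_ofNat, ENNReal.ofReal_ofNat]
        ring

/-- if `P` satisfies `V(Pf) ≤ α₀ V(f) + B₀ ‖f‖₁` with `α₀ < 1/3` and is an `L¹`
contraction, then the hole operator `P_H f = P(f·χ_{X₀})`, `X₀ = [0,1] \ H` with `H` an open
interval, satisfies `V(P_H f) ≤ 3α₀ V(f) + (2α₀ + B₀) ‖f‖₁` for all `f ∈ BV([0,1])`. -/
theorem hole_operator_lasota_yorke
    (P : (ℝ → ℝ) → (ℝ → ℝ)) (α₀ B₀ : ℝ)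
    (hα₀ : 0 < α₀) (hα₁ : α₀ < 1/3) (hB₀ : 0 ≤ B₀)
    (hLY : ∀ f, bvVar (P f) ≤ ENNReal.ofReal α₀ * bvVar f + ENNReal.ofReal B₀ * l1Norm f)
    (hL1 : ∀ f, l1Norm (P f) ≤ l1Norm f)
    (a b : ℝ) (hab : Set.Ioo a b ⊆ Set.Icc 0 1) :
    ∀ f, BoundedVariationOn f (Set.Icc 0 1) →
      bvVar (P ((Set.Icc (0:ℝ) 1 \ Set.Ioo a b).indicator f))
        ≤ ENNReal.ofReal (3 * α₀) * bvVar f + ENNReal.ofReal (2 * α₀ + B₀) * l1Norm f :=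
  hole_operator_lasota_yorke_general P α₀ B₀ hα₀ hB₀ hLY a b hab
end

section
/- For the map T on [0,1] given by T(x) = 9x/(1−x) for 0 ≤ x ≤ 1/10 and T(x) = 10x − i for i/10 < x ≤ (i+1)/10 (i = 1,...,9), the associated Perron–Frobenius operator P satisfies V(Pf) ≤ (1/9)·V(f) + (2/9)·‖f‖₁ for all f ∈ BV([0,1]). -/
/-!
In the variable `y = x/(9+x)`, which maps `[0,1]` monotonically onto `[0,1/10]`, the branch
`9x/(1-x)` contributes `w f` with `w y = (1-y)^2/9`, where `|w| ≤ 1/9` and `w` is `2/9`-Lipschitz;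
each affine branch contributes `1/10` of the variation of `f` on its interval.
For such weights `V(w f) ≤ sup |w| V(f) + Lip(w) ‖f‖₁`: on a partition interval `[a,b]`,
splitting `w b f b - w a f a` at any `t ∈ [a,b]` bounds it by
`sup |w| V_{[a,b]}(f) + Lip(w) (b-a) |f t|`, and the infimum over `t` of `(b-a) |f t|` is at most
`∫_a^b |f|`.
-/

open MeasureTheory Set ENNReal

/-- The map `T(x) = 9x/(1-x)` on `[0,1/10]` and `T(x) = 10x - i` on `(i/10,(i+1)/10]`,
`i = 1,…,9`. -/
noncomputable def T16 : ℝ → ℝ :=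
  fun x => if x ≤ 1/10 then 9 * x / (1 - x) else 10 * x - (⌈10 * x⌉ - 1)

/-- The Perron–Frobenius operator of `T16`:
`Pf(x) = Σ_{y : Ty = x} f(y)/|T'(y)|`, computed on the inverse branches:
`y = x/(9+x)` with `1/|T'(y)| = 9/(9+x)²`, and `y = (x+i)/10` with `1/|T'(y)| = 1/10`. -/
noncomputable def P16 (f : ℝ → ℝ) : ℝ → ℝ :=
  fun x => 9 / (9 + x) ^ 2 * f (x / (9 + x))
    + ∑ i ∈ (Finset.Icc 1 9 : Finset ℕ), (1 / 10 : ℝ) * f ((x + (i : ℝ)) / 10)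

open scoped NNReal

theorem eVariationOn_add_le (f g : ℝ → ℝ) (s : Set ℝ) :
    eVariationOn (fun x => f x + g x) s ≤ eVariationOn f s + eVariationOn g s := by
  refine iSup_le fun ⟨n, u, hu, us⟩ => ?_
  calc ∑ i ∈ Finset.range n, edist (f (u (i+1)) + g (u (i+1))) (f (u i) + g (u i))
      ≤ ∑ i ∈ Finset.range n,
        (edist (f (u (i+1))) (f (u i)) + edist (g (u (i+1))) (g (u i))) :=
        Finset.sum_le_sum fun i _ => edist_add_add_le _ _ _ _
    _ ≤ eVariationOn f s + eVariationOn g s := by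
        rw [Finset.sum_add_distrib]
        exact add_le_add (eVariationOn.sum_le hu us) (eVariationOn.sum_le hu us)

theorem eVariationOn_sum_le {ι : Type*} (S : Finset ι) (F : ι → ℝ → ℝ) (s : Set ℝ) :
    eVariationOn (fun x => ∑ i ∈ S, F i x) s ≤ ∑ i ∈ S, eVariationOn (F i) s := by
  classical
  induction S using Finset.induction with
  | empty => simp [eVariationOn.eq_zero_iff]
  | insert a S ha ih =>
      simp only [Finset.sum_insert ha]
      exact (eVariationOn_add_le _ _ s).trans (add_le_add_right ih _)

theorem eVariationOn_const_mul (c : ℝ) (f : ℝ → ℝ) (s : Set ℝ) :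
    eVariationOn (fun x => c * f x) s = ‖c‖ₑ * eVariationOn f s := by
  simp only [eVariationOn, ENNReal.mul_iSup, Finset.mul_sum, ← smul_eq_mul (a := c), edist_smul₀]
  rfl

theorem eVariationOn_comp_add_div (f : ℝ → ℝ) {r : ℝ} (hr : 0 < r) (c a b : ℝ) :
    eVariationOn (fun x => f ((x + c) / r)) (Icc a b) =
      eVariationOn f (Icc ((a + c) / r) ((b + c) / r)) := by
  have hmono : MonotoneOn (fun x : ℝ => (x + c) / r) (Icc a b) := fun x _ y _ hxy => by
    dsimp only
    gcongr
  have himage : (fun x : ℝ => (x + c) / r) '' Icc a b = Icc ((a + c) / r) ((b + c) / r) := by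
    simp only [div_eq_mul_inv]
    rw [← image_image (· * r⁻¹) (· + c), image_add_const_Icc,
      image_mul_right_Icc' _ _ (inv_pos.2 hr)]
  rw [← himage]
  exact eVariationOn.comp_eq_of_monotoneOn f _ hmono

theorem edist_add_edist_le_eVariationOn_Icc (f : ℝ → ℝ) {a t b : ℝ} (hat : a ≤ t) (htb : t ≤ b) :
    edist (f t) (f a) + edist (f b) (f t) ≤ eVariationOn f (Icc a b) := by
  rw [← Icc_union_Icc_eq_Icc hat htb]
  refine le_trans (add_le_add ?_ ?_) (eVariationOn.add_le_union f fun x hx y hy => hx.2.trans hy.1)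
  · exact eVariationOn.edist_le f ⟨hat, le_rfl⟩ ⟨le_rfl, hat⟩
  · exact eVariationOn.edist_le f ⟨htb, le_rfl⟩ ⟨le_rfl, htb⟩

theorem setLIntegral_Icc_add_Icc (g : ℝ → ℝ≥0∞) {a b c : ℝ} (hab : a ≤ b) (hbc : b ≤ c) :
    (∫⁻ x in Icc a b, g x) + ∫⁻ x in Icc b c, g x = ∫⁻ x in Icc a c, g x := by
  have hdisj : Disjoint (Ico a b) (Icc b c) :=
    Set.disjoint_left.2 fun x hx hx' => (not_le.2 hx.2) hx'.1
  rw [Measure.restrict_congr_set Ico_ae_eq_Icc.symm, ← lintegral_add_measure,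
    ← Measure.restrict_union hdisj measurableSet_Icc, Ico_union_Icc_eq_Icc hab hbc]

theorem sum_setLIntegral_Icc (g : ℝ → ℝ≥0∞) {u : ℕ → ℝ} (hu : Monotone u) (n : ℕ) :
    ∑ i ∈ Finset.range n, ∫⁻ x in Icc (u i) (u (i+1)), g x = ∫⁻ x in Icc (u 0) (u n), g x := by
  induction n with
  | zero => simp
  | succ n ih =>
      rw [Finset.sum_range_succ, ih, setLIntegral_Icc_add_Icc g (hu n.zero_le) (hu n.le_succ)]

theorem edist_mul_le_eVariationOn_add_setLIntegral {w f : ℝ → ℝ} {C : ℝ≥0∞} {L : ℝ≥0}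
    {a b : ℝ} (hab : a ≤ b) (ha : ‖w a‖ₑ ≤ C) (hb : ‖w b‖ₑ ≤ C)
    (hL : edist (w b) (w a) ≤ L * edist b a) :
    edist (w b * f b) (w a * f a) ≤
      C * eVariationOn f (Icc a b) + L * ∫⁻ x in Icc a b, ‖f x‖ₑ := by
  set K : ℝ≥0∞ := L * ENNReal.ofReal (b - a)
  have hpoint : ∀ t ∈ Icc a b, edist (w b * f b) (w a * f a) ≤
      C * eVariationOn f (Icc a b) + K * ‖f t‖ₑ := by
    rintro t ⟨hat, htb⟩
    calc edist (w b * f b) (w a * f a)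
        ≤ edist (w b * f b) (w b * f t) + edist (w b * f t) (w a * f t)
          + edist (w a * f t) (w a * f a) := edist_triangle4 _ _ _ _
      _ = ‖w b‖ₑ * edist (f b) (f t) + edist (w b) (w a) * ‖f t‖ₑ
          + ‖w a‖ₑ * edist (f t) (f a) := by
          simp only [edist_eq_enorm_sub, ← mul_sub, ← sub_mul, enorm_mul]
      _ ≤ C * edist (f b) (f t) + L * edist b a * ‖f t‖ₑ + C * edist (f t) (f a) := by
          gcongr
      _ = C * (edist (f t) (f a) + edist (f b) (f t)) + K * ‖f t‖ₑ := by
          rw [edist_dist b a, Real.dist_eq, abs_of_nonneg (sub_nonneg.2 hab)]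
          ring
      _ ≤ C * eVariationOn f (Icc a b) + K * ‖f t‖ₑ := by
          gcongr
          exact edist_add_edist_le_eVariationOn_Icc f hat htb
  have : Nonempty (Icc a b) := ⟨⟨a, left_mem_Icc.2 hab⟩⟩
  calc edist (w b * f b) (w a * f a)
      ≤ ⨅ t : Icc a b, (C * eVariationOn f (Icc a b) + K * ‖f t‖ₑ) :=
        le_iInf fun t => hpoint t t.2
    _ = C * eVariationOn f (Icc a b) + L * ((⨅ t ∈ Icc a b, ‖f t‖ₑ) * volume (Icc a b)) := by
        have hK : K ≠ ∞ := mul_ne_top coe_ne_top ofReal_ne_top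
        rw [← ENNReal.add_iInf, ← ENNReal.mul_iInf fun h => absurd h hK, iInf_subtype',
          Real.volume_Icc]
        ring
    _ ≤ C * eVariationOn f (Icc a b) + L * ∫⁻ x in Icc a b, ‖f x‖ₑ := by
        gcongr
        exact iInf_mul_le_setLIntegral _ measurableSet_Icc

theorem eVariationOn_mul_le_of_lipschitzOnWith {s : Set ℝ} (hs : s.OrdConnected) {w f : ℝ → ℝ}
    {C : ℝ≥0∞} {L : ℝ≥0} (hC : ∀ x ∈ s, ‖w x‖ₑ ≤ C) (hL : LipschitzOnWith L w s) :
    eVariationOn (fun x => w x * f x) s ≤ C * eVariationOn f s + L * ∫⁻ x in s, ‖f x‖ₑ := by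
  refine iSup_le fun ⟨n, u, hu, us⟩ => ?_
  have hsub : Icc (u 0) (u n) ⊆ s := hs.out (us 0) (us n)
  calc ∑ i ∈ Finset.range n, edist (w (u (i+1)) * f (u (i+1))) (w (u i) * f (u i))
      ≤ ∑ i ∈ Finset.range n, (C * eVariationOn f (Icc (u i) (u (i+1)))
          + L * ∫⁻ x in Icc (u i) (u (i+1)), ‖f x‖ₑ) :=
        Finset.sum_le_sum fun i _ => edist_mul_le_eVariationOn_add_setLIntegral (hu i.le_succ)
          (hC _ (us i)) (hC _ (us _)) (hL (us _) (us i))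
    _ = C * eVariationOn f (Icc (u 0) (u n)) + L * ∫⁻ x in Icc (u 0) (u n), ‖f x‖ₑ := by
        rw [Finset.sum_add_distrib, ← Finset.mul_sum, ← Finset.mul_sum, eVariationOn.sum' f hu,
          sum_setLIntegral_Icc _ hu]
    _ ≤ C * eVariationOn f s + L * ∫⁻ x in s, ‖f x‖ₑ := by
        gcongr
        exact eVariationOn.mono f hsub

theorem monotoneOn_div_nine_add : MonotoneOn (fun x : ℝ => x / (9 + x)) (Icc 0 1) := by
  intro x hx y hy hxy
  dsimp only
  rw [div_le_div_iff₀ (by linarith [hx.1]) (by linarith [hy.1])]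
  nlinarith

theorem image_div_nine_add_Icc : (fun x : ℝ => x / (9 + x)) '' Icc 0 1 = Icc 0 (1 / 10) := by
  ext y
  constructor
  · rintro ⟨x, ⟨hx0, hx1⟩, rfl⟩
    exact ⟨by positivity, by rw [div_le_iff₀ (by linarith)]; linarith⟩
  · rintro ⟨hy0, hy1⟩
    have h1 : 0 < 1 - y := by linarith
    refine ⟨9 * y / (1 - y), ⟨by positivity, by rw [div_le_one h1]; linarith⟩, ?_⟩
    field_simp
    ring

theorem eVariationOn_nonlinear_branch_eq (f : ℝ → ℝ) :
    eVariationOn (fun x => 9 / (9 + x) ^ 2 * f (x / (9 + x))) (Icc 0 1) =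
      eVariationOn (fun y => (1 - y) ^ 2 / 9 * f y) (Icc 0 (1 / 10)) := by
  rw [← image_div_nine_add_Icc,
    ← eVariationOn.comp_eq_of_monotoneOn _ _ monotoneOn_div_nine_add]
  refine eVariationOn.eq_of_eqOn fun x hx => ?_
  have : (9 : ℝ) + x ≠ 0 := by linarith [hx.1]
  simp only [Function.comp_apply]
  congr 1
  field_simp
  ring

theorem enorm_one_sub_sq_div_nine_le {y : ℝ} (hy : y ∈ Icc (0 : ℝ) (1 / 10)) :
    ‖(1 - y) ^ 2 / 9‖ₑ ≤ ENNReal.ofReal (1 / 9) := by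
  rw [Real.enorm_eq_ofReal (by positivity)]
  exact ENNReal.ofReal_le_ofReal (by nlinarith [hy.1, hy.2])

theorem lipschitzOnWith_one_sub_sq_div_nine :
    LipschitzOnWith (2 / 9) (fun y : ℝ => (1 - y) ^ 2 / 9) (Icc 0 (1 / 10)) := by
  refine LipschitzOnWith.of_dist_le_mul fun x hx y hy => ?_
  have hxy : (1 - x) ^ 2 / 9 - (1 - y) ^ 2 / 9 = (2 - x - y) / 9 * (y - x) := by ring
  rw [Real.dist_eq, Real.dist_eq, hxy, abs_mul, abs_sub_comm y x,
    abs_of_nonneg (by linarith [hx.2, hy.2])]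
  push_cast
  gcongr
  linarith [hx.1, hy.1]

theorem eVariationOn_nonlinear_branch_le (f : ℝ → ℝ) :
    eVariationOn (fun x => 9 / (9 + x) ^ 2 * f (x / (9 + x))) (Icc 0 1) ≤
      ENNReal.ofReal (1 / 9) * eVariationOn f (Icc 0 (1 / 10))
        + ENNReal.ofReal (2 / 9) * ∫⁻ x in Icc (0 : ℝ) (1 / 10), ‖f x‖ₑ := by
  rw [eVariationOn_nonlinear_branch_eq, show ENNReal.ofReal (2 / 9) = ((2 / 9 : ℝ≥0) : ℝ≥0∞) by
    rw [← ENNReal.ofReal_coe_nnreal]; norm_num]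
  exact eVariationOn_mul_le_of_lipschitzOnWith ordConnected_Icc
    (fun y hy => enorm_one_sub_sq_div_nine_le hy) lipschitzOnWith_one_sub_sq_div_nine

theorem eVariationOn_linear_branches_le (f : ℝ → ℝ) :
    eVariationOn (fun x => ∑ i ∈ (Finset.Icc 1 9 : Finset ℕ), (1 / 10 : ℝ) * f ((x + i) / 10))
        (Icc 0 1) ≤ ENNReal.ofReal (1 / 10) * eVariationOn f (Icc (1 / 10) 1) := by
  set u : ℕ → ℝ := fun j => (j + 1) / 10
  have hu : Monotone u := fun j k hjk => by
    simp only [u]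
    gcongr
  have hbranch : ∀ j, eVariationOn (fun x => (1 / 10 : ℝ) * f ((x + (1 + j : ℕ)) / 10)) (Icc 0 1)
      = ENNReal.ofReal (1 / 10) * eVariationOn f (Icc (u j) (u (j + 1))) := fun j => by
    rw [eVariationOn_const_mul, eVariationOn_comp_add_div f (by norm_num : (0 : ℝ) < 10),
      Real.enorm_eq_ofReal (by norm_num)]
    simp only [u]
    push_cast
    ring_nf
  calc _ ≤ ∑ i ∈ (Finset.Icc 1 9 : Finset ℕ),
          eVariationOn (fun x => (1 / 10 : ℝ) * f ((x + i) / 10)) (Icc 0 1) :=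
        eVariationOn_sum_le _ _ _
    _ = ENNReal.ofReal (1 / 10) * eVariationOn f (Icc (1 / 10) 1) := by
        rw [← Finset.Ico_add_one_right_eq_Icc, Finset.sum_Ico_eq_sum_range]
        simp only [hbranch, ← Finset.mul_sum, eVariationOn.sum' f hu]
        norm_num [u]

/-- the Perron–Frobenius operator of the map `T16` satisfies
`V(Pf) ≤ (1/9) V(f) + (2/9) ‖f‖₁` for all `f ∈ BV([0,1])`. -/
theorem lasota_yorke_example_map :
    ∀ f : ℝ → ℝ, BoundedVariationOn f (Set.Icc 0 1) →
      bvVar (P16 f) ≤ ENNReal.ofReal (1/9) * bvVar f + ENNReal.ofReal (2/9) * l1Norm f := by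
  intro f _
  have hsplit : eVariationOn f (Icc 0 (1 / 10)) + eVariationOn f (Icc (1 / 10) 1) = bvVar f := by
    rw [bvVar, ← eVariationOn.union f (isGreatest_Icc (by norm_num)) (isLeast_Icc (by norm_num)),
      Icc_union_Icc_eq_Icc (by norm_num) (by norm_num)]
  calc bvVar (P16 f)
      ≤ ENNReal.ofReal (1 / 9) * eVariationOn f (Icc 0 (1 / 10))
          + ENNReal.ofReal (2 / 9) * (∫⁻ x in Icc (0 : ℝ) (1 / 10), ‖f x‖ₑ)
        + ENNReal.ofReal (1 / 10) * eVariationOn f (Icc (1 / 10) 1) :=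
      (eVariationOn_add_le _ _ _).trans
        (add_le_add (eVariationOn_nonlinear_branch_le f) (eVariationOn_linear_branches_le f))
    _ ≤ ENNReal.ofReal (1 / 9) * eVariationOn f (Icc 0 (1 / 10))
          + ENNReal.ofReal (2 / 9) * l1Norm f
        + ENNReal.ofReal (1 / 9) * eVariationOn f (Icc (1 / 10) 1) := by
      gcongr
      · exact lintegral_mono_set (Icc_subset_Icc le_rfl (by norm_num))
      · norm_num
    _ = ENNReal.ofReal (1/9) * bvVar f + ENNReal.ofReal (2/9) * l1Norm f := by
      rw [← hsplit]
      ring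
end
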